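/- arXiv:1403.4134 — 3 statements merged into one kernel-verified Lean document; each statement's English description precedes it below -/
import Mathlib

section
/- (Convergence of inhomogeneous Markov chains) Let π ∈ ℝⁿ be a probability vector, and fix constants ξ_min > 0 and a ∈ (0,1]. Let (ξ_k)_{k≥0} be a sequence with ξ_k ∈ {0} ∪ [ξ_min, 1] for all k and ξ_k > 0 for infinitely many k, and let (α_k)_{k≥0} be a sequence of vectors in ℝⁿ with a ≤ α_k[ℓ] ≤ 1 for all k, ℓ. Set M_k = M(ξ_k, α_k). Then for every probability vector x₀ ∈ ℝⁿ, the products x_k = x₀·M₀·M₁·⋯·M_{k−1} converge pointwise to π as k → ∞. -/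
/-!
`pi` is stationary for every `M(ξ, α)`, so the deviation `e = x - pi` evolves by the same
matrices and keeps total mass `0`. On mass-zero vectors, `M(ξ, α)` contracts the `ℓ¹` norm by the
factor `1 - ξ a`: the rank-one part of `M` contributes `ξ |∑ α i e i|`, and since `∑ e i = 0`
this is at most `ξ ∑ (α i - a) |e i|`. The `ℓ¹` distance to `pi` is therefore nonincreasing and
shrinks by the fixed factor `1 - ξmin a < 1` infinitely often, hence tends to `0`.
-/

open Matrix BigOperators Finset Filter

/-- The family of Markov transition matrices `M(ξ,α)` with stationary distribution `pi`:
`M[i,ℓ] = (ξ/(π·α))·α[i]·π[ℓ]·α[ℓ]` for `i ≠ ℓ`, and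
`M[i,i] = 1 − ξ·α[i] + (ξ/(π·α))·α[i]²·π[i]`. -/
noncomputable def Mmat {n : ℕ} (pi α : Fin n → ℝ) (ξ : ℝ) : Matrix (Fin n) (Fin n) ℝ :=
  fun i ℓ =>
    if i = ℓ then 1 - ξ * α i + (ξ / (∑ q, pi q * α q)) * (α i) ^ 2 * pi i
    else (ξ / (∑ q, pi q * α q)) * α i * pi ℓ * α ℓ

section Mmat

variable {n : ℕ} (pi α : Fin n → ℝ) (ξ : ℝ)

lemma vecMul_Mmat_apply (x : Fin n → ℝ) (ℓ : Fin n) :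
    (x ᵥ* Mmat pi α ξ) ℓ = x ℓ * (1 - ξ * α ℓ)
      + ξ / (∑ q, pi q * α q) * pi ℓ * α ℓ * ∑ i, x i * α i := by
  have hterm : ∀ i, x i * Mmat pi α ξ i ℓ =
      (if i = ℓ then x ℓ * (1 - ξ * α ℓ) else 0)
        + ξ / (∑ q, pi q * α q) * pi ℓ * α ℓ * (x i * α i) := by
    intro i
    by_cases hi : i = ℓ
    · subst hi; simp only [Mmat, if_true]; ring
    · simp only [Mmat, hi, if_false]; ring
  simp only [vecMul, dotProduct]
  rw [sum_congr rfl fun i _ => hterm i, sum_add_distrib, sum_ite_eq' univ ℓ, ← mul_sum]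
  simp

variable {pi α} (hS : ∑ q, pi q * α q ≠ 0)
include hS

lemma sum_div_mul_mul_eq (ξ : ℝ) : ∑ ℓ, ξ / (∑ q, pi q * α q) * pi ℓ * α ℓ = ξ := by
  simp_rw [mul_assoc, ← mul_sum]
  exact div_mul_cancel₀ ξ hS

lemma vecMul_Mmat_self : pi ᵥ* Mmat pi α ξ = pi := by
  ext ℓ
  rw [vecMul_Mmat_apply]
  field_simp
  ring

lemma sum_vecMul_Mmat (x : Fin n → ℝ) : ∑ ℓ, (x ᵥ* Mmat pi α ξ) ℓ = ∑ i, x i := by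
  simp_rw [vecMul_Mmat_apply, sum_add_distrib, ← sum_mul, sum_div_mul_mul_eq hS, mul_sum,
    ← sum_add_distrib]
  exact sum_congr rfl fun i _ => by ring

end Mmat

lemma mul_sum_abs_add_abs_sum_mul_le {ι : Type*} (s : Finset ι) {a : ℝ} {α e : ι → ℝ}
    (hα : ∀ i ∈ s, a ≤ α i) (he : ∑ i ∈ s, e i = 0) :
    a * ∑ i ∈ s, |e i| + |∑ i ∈ s, α i * e i| ≤ ∑ i ∈ s, α i * |e i| := by
  have htri : |∑ i ∈ s, (α i - a) * e i| ≤ ∑ i ∈ s, (α i - a) * |e i| := by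
    refine (abs_sum_le_sum_abs _ _).trans (sum_le_sum fun i hi => ?_)
    rw [abs_mul, abs_of_nonneg (sub_nonneg.2 (hα i hi))]
  simp only [sub_mul, sum_sub_distrib, ← mul_sum, he, mul_zero, sub_zero] at htri
  linarith

lemma sum_abs_vecMul_Mmat_le {n : ℕ} {pi α e : Fin n → ℝ} {ξ a : ℝ}
    (hpi : ∀ i, 0 ≤ pi i) (hS : 0 < ∑ q, pi q * α q) (ha : 0 ≤ a)
    (hα : ∀ ℓ, a ≤ α ℓ ∧ α ℓ ≤ 1) (hξ0 : 0 ≤ ξ) (hξ1 : ξ ≤ 1) (he : ∑ i, e i = 0) :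
    ∑ ℓ, |(e ᵥ* Mmat pi α ξ) ℓ| ≤ (1 - ξ * a) * ∑ i, |e i| := by
  set c := ξ / ∑ q, pi q * α q
  have hpointwise : ∀ ℓ, |(e ᵥ* Mmat pi α ξ) ℓ|
      ≤ (1 - ξ * α ℓ) * |e ℓ| + c * pi ℓ * α ℓ * |∑ i, α i * e i| := by
    intro ℓ
    have hdiag : 0 ≤ 1 - ξ * α ℓ := by nlinarith [hα ℓ]
    have hrank : 0 ≤ c * pi ℓ * α ℓ :=
      mul_nonneg (mul_nonneg (div_nonneg hξ0 hS.le) (hpi ℓ)) (ha.trans (hα ℓ).1)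
    rw [vecMul_Mmat_apply]
    refine (abs_add_le _ _).trans_eq ?_
    simp_rw [mul_comm (e _) (α _)]
    rw [abs_mul, abs_mul, abs_of_nonneg hdiag, abs_of_nonneg hrank, mul_comm]
  have hkey := mul_sum_abs_add_abs_sum_mul_le univ (fun ℓ _ => (hα ℓ).1) he
  calc ∑ ℓ, |(e ᵥ* Mmat pi α ξ) ℓ|
      ≤ ∑ ℓ, ((1 - ξ * α ℓ) * |e ℓ| + c * pi ℓ * α ℓ * |∑ i, α i * e i|) :=
        sum_le_sum fun ℓ _ => hpointwise ℓ
    _ = ∑ ℓ, |e ℓ| - ξ * (∑ ℓ, α ℓ * |e ℓ| - |∑ i, α i * e i|) := by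
        rw [sum_add_distrib, ← sum_mul, sum_div_mul_mul_eq hS.ne']
        simp only [sub_mul, one_mul, sum_sub_distrib, mul_assoc, ← mul_sum]
        ring
    _ ≤ (1 - ξ * a) * ∑ i, |e i| := by nlinarith

lemma tendsto_zero_of_antitone_of_frequently_le_mul {V : ℕ → ℝ} {r : ℝ}
    (hV0 : ∀ k, 0 ≤ V k) (hV : Antitone V) (hr : r < 1)
    (hfreq : ∃ᶠ k in atTop, V (k + 1) ≤ r * V k) : Tendsto V atTop (nhds 0) := by
  have hlim : Tendsto V atTop (nhds (⨅ k, V k)) :=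
    tendsto_atTop_ciInf hV ⟨0, by rintro _ ⟨k, rfl⟩; exact hV0 k⟩
  obtain ⟨φ, hφ, hφr⟩ := extraction_of_frequently_atTop hfreq
  have hle : ⨅ k, V k ≤ r * ⨅ k, V k :=
    le_of_tendsto_of_tendsto' (hlim.comp (tendsto_add_atTop_nat 1 |>.comp hφ.tendsto_atTop))
      ((hlim.comp hφ.tendsto_atTop).const_mul r) hφr
  have hinf : ⨅ k, V k = 0 := by nlinarith [le_ciInf hV0]
  exact hinf ▸ hlim

theorem stmt8_general {n : ℕ} (pi : Fin n → ℝ)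
    (hpi0 : ∀ i, 0 ≤ pi i) (hpi1 : ∑ i, pi i = 1)
    (ξmin : ℝ) (hξmin : 0 < ξmin) (a : ℝ) (ha0 : 0 < a)
    (ξ : ℕ → ℝ) (hξ : ∀ k, ξ k = 0 ∨ (ξmin ≤ ξ k ∧ ξ k ≤ 1))
    (hξinf : ∀ N : ℕ, ∃ k, N ≤ k ∧ 0 < ξ k)
    (α : ℕ → Fin n → ℝ) (hα : ∀ k ℓ, a ≤ α k ℓ ∧ α k ℓ ≤ 1)
    (x₀ : Fin n → ℝ) (hx₀1 : ∑ i, x₀ i = 1)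
    (x : ℕ → Fin n → ℝ) (hx0 : x 0 = x₀)
    (hxk : ∀ k, x (k + 1) = x k ᵥ* Mmat pi (α k) (ξ k)) :
    ∀ i, Tendsto (fun k => x k i) atTop (nhds (pi i)) := by
  have hS : ∀ k, 0 < ∑ q, pi q * α k q := fun k => ha0.trans_le <|
    calc a = ∑ q, pi q * a := by rw [← sum_mul, hpi1, one_mul]
      _ ≤ _ := sum_le_sum fun q _ => mul_le_mul_of_nonneg_left (hα k q).1 (hpi0 q)
  have hξ01 : ∀ k, 0 ≤ ξ k ∧ ξ k ≤ 1 := fun k => by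
    rcases hξ k with h | h <;> [simp [h]; exact ⟨hξmin.le.trans h.1, h.2⟩]
  have he : ∀ k, x (k + 1) - pi = (x k - pi) ᵥ* Mmat pi (α k) (ξ k) := fun k => by
    rw [sub_vecMul, vecMul_Mmat_self _ (hS k).ne', hxk]
  have hmass : ∀ k, ∑ i, (x k - pi) i = 0 := fun k => by
    induction k with
    | zero => simp [hx0, hx₀1, hpi1]
    | succ k ih => rwa [he, sum_vecMul_Mmat _ (hS k).ne']
  set V : ℕ → ℝ := fun k => ∑ i, |(x k - pi) i|
  have hV0 : ∀ k, 0 ≤ V k := fun k => sum_nonneg fun i _ => abs_nonneg _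
  have hstep : ∀ k, V (k + 1) ≤ (1 - ξ k * a) * V k := fun k => by
    simp only [V, he]
    exact sum_abs_vecMul_Mmat_le hpi0 (hS k) ha0.le (hα k) (hξ01 k).1 (hξ01 k).2 (hmass k)
  have hanti : Antitone V := antitone_nat_of_succ_le fun k =>
    (hstep k).trans (by nlinarith [hV0 k, mul_nonneg (hξ01 k).1 ha0.le])
  have hfreq : ∃ᶠ k in atTop, V (k + 1) ≤ (1 - ξmin * a) * V k :=
    frequently_atTop.2 fun N => (hξinf N).imp fun k ⟨hNk, hk⟩ => ⟨hNk, (hstep k).trans <|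
      mul_le_mul_of_nonneg_right (by nlinarith [(hξ k).resolve_left hk.ne']) (hV0 k)⟩
  have hV := tendsto_zero_of_antitone_of_frequently_le_mul hV0 hanti
    (by nlinarith) hfreq
  intro i
  have hdev : Tendsto (fun k => |x k i - pi i|) atTop (nhds 0) :=
    squeeze_zero (fun _ => abs_nonneg _)
      (fun k => single_le_sum (f := fun j => |(x k - pi) j|) (fun _ _ => abs_nonneg _) (mem_univ i)) hV
  simpa using (tendsto_zero_iff_abs_tendsto_zero _ |>.2 hdev).add_const (pi i)

/-- convergence of the inhomogeneous Markov chain. If `ξ_k ∈ {0} ∪ [ξmin, 1]`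
with `ξ_k > 0` infinitely often, and `a ≤ α_k[ℓ] ≤ 1`, then for any initial probability
vector `x₀` the iterates `x_{k+1} = x_k · M(ξ_k, α_k)` converge pointwise to `pi`. -/
theorem stmt8 {n : ℕ} (hn : 1 ≤ n) (pi : Fin n → ℝ)
    (hpi0 : ∀ i, 0 ≤ pi i) (hpi1 : ∑ i, pi i = 1)
    (ξmin : ℝ) (hξmin : 0 < ξmin) (a : ℝ) (ha0 : 0 < a) (ha1 : a ≤ 1)
    (ξ : ℕ → ℝ) (hξ : ∀ k, ξ k = 0 ∨ (ξmin ≤ ξ k ∧ ξ k ≤ 1))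
    (hξinf : ∀ N : ℕ, ∃ k, N ≤ k ∧ 0 < ξ k)
    (α : ℕ → Fin n → ℝ) (hα : ∀ k ℓ, a ≤ α k ℓ ∧ α k ℓ ≤ 1)
    (x₀ : Fin n → ℝ) (hx₀0 : ∀ i, 0 ≤ x₀ i) (hx₀1 : ∑ i, x₀ i = 1)
    (x : ℕ → Fin n → ℝ) (hx0 : x 0 = x₀)
    (hxk : ∀ k, x (k + 1) = x k ᵥ* Mmat pi (α k) (ξ k)) :
    ∀ i, Tendsto (fun k => x k i) atTop (nhds (pi i)) :=
  stmt8_general pi hpi0 hpi1 ξmin hξmin a ha0 ξ hξ hξinf α hα x₀ hx₀1 x hx0 hxk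
end

section
/- (Primitivity of the constrained Markov matrix) Let π ∈ ℝⁿ be a probability vector with π[i] > 0 for all i, let ξ ∈ (0,1] and α ∈ ℝⁿ with 0 < α[ℓ] ≤ 1 for all ℓ, and let M = M(ξ,α). Let A ∈ {0,1}^{n×n} be symmetric with A[i,i] = 1 for all i, such that the directed graph on {1,…,n} with an edge from i to ℓ whenever A[i,ℓ] = 1 is strongly connected. Let M̃ be the modification of M by A (forbidden off-diagonal entries set to zero and their mass added to the diagonal). Then the matrix power (M̃)ⁿ is entrywise strictly positive; i.e., M̃ is a primitive matrix. -/
/-! All entries of `M(ξ,α)` are positive (on the diagonal because `ξ α[i] ≤ 1`), so `M̃` is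
nonnegative, has positive diagonal and is positive on every edge of `A`. For such a matrix the
supports of the `i`-th rows of its powers increase with the exponent, hence stabilise after at most
`n` steps; a stable support is closed under the edges of the positivity graph, so by strong
connectivity it is everything. -/

open Matrix BigOperators Finset Filter

/-- The modification of a Markov matrix `M` by a 0-1 motion-constraint matrix `A`:
forbidden off-diagonal transition probabilities are set to zero and their mass is
moved onto the diagonal. -/
noncomputable def modM {n : ℕ} (A M : Matrix (Fin n) (Fin n) ℝ) : Matrix (Fin n) (Fin n) ℝ :=
  fun i ℓ =>
    if i = ℓ then M i i + ∑ j ∈ Finset.univ.filter (fun j => j ≠ i ∧ A i j = 0), M i j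
    else A i ℓ * M i ℓ

theorem Finset.exists_le_card_succ_eq_of_monotone {ι : Type*} [Fintype ι] (S : ℕ → Finset ι)
    (hS : Monotone S) : ∃ k ≤ Fintype.card ι, S (k + 1) = S k := by
  by_contra! hne
  have hgrow : ∀ k ≤ Fintype.card ι + 1, k ≤ (S k).card := by
    intro k hk
    induction k with
    | zero => exact Nat.zero_le _
    | succ k ih =>
      have hlt : S k ⊂ S (k + 1) := (hS k.le_succ).ssubset_of_ne (hne k (by omega)).symm
      have := Finset.card_lt_card hlt
      have := ih (by omega)
      omega
  have := hgrow _ le_rfl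
  have := (S (Fintype.card ι + 1)).card_le_univ
  omega

namespace Matrix

variable {ι R : Type*} [Fintype ι] [DecidableEq ι] [Semiring R] [PartialOrder R]
  [IsStrictOrderedRing R] {M : Matrix ι ι R}

theorem pow_succ_apply_pos_iff (hM : ∀ i j, 0 ≤ M i j) {k : ℕ} {i j : ι} :
    0 < (M ^ (k + 1)) i j ↔ ∃ l, 0 < (M ^ k) i l ∧ 0 < M l j := by
  have hterm : ∀ l, 0 ≤ (M ^ k) i l * M l j :=
    fun l => mul_nonneg (pow_apply_nonneg hM k i l) (hM l j)
  rw [pow_succ, mul_apply, Finset.sum_pos_iff_of_nonneg fun l _ => hterm l]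
  simp only [Finset.mem_univ, true_and]
  refine exists_congr fun l => ⟨fun h => ?_, fun h => mul_pos h.1 h.2⟩
  exact ⟨(pow_apply_nonneg hM k i l).lt_of_ne (by rintro h'; simp [← h'] at h),
    (hM l j).lt_of_ne (by rintro h'; simp [← h'] at h)⟩

theorem pow_apply_pos_of_le (hM : ∀ i j, 0 ≤ M i j) (hdiag : ∀ i, 0 < M i i) {k m : ℕ}
    {i j : ι} (h : 0 < (M ^ k) i j) (hkm : k ≤ m) : 0 < (M ^ m) i j := by
  induction m, hkm using Nat.le_induction with
  | base => exact h
  | succ m _ ih => exact (pow_succ_apply_pos_iff hM).2 ⟨j, ih, hdiag j⟩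

theorem pow_apply_pos_of_reflTransGen (hM : ∀ i j, 0 ≤ M i j) {k : ℕ} {i a b : ι}
    (hstable : ∀ j, 0 < (M ^ (k + 1)) i j → 0 < (M ^ k) i j) (ha : 0 < (M ^ k) i a)
    (hab : Relation.ReflTransGen (fun a b => 0 < M a b) a b) : 0 < (M ^ k) i b := by
  induction hab with
  | refl => exact ha
  | tail _ hcd ih => exact hstable _ ((pow_succ_apply_pos_iff hM).2 ⟨_, ih, hcd⟩)

theorem pow_card_apply_pos (hM : ∀ i j, 0 ≤ M i j) (hdiag : ∀ i, 0 < M i i)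
    (hconn : ∀ i j, Relation.ReflTransGen (fun a b => 0 < M a b) i j) (i j : ι) :
    0 < (M ^ Fintype.card ι) i j := by
  classical
  let S : ℕ → Finset ι := fun k => {l | 0 < (M ^ k) i l}
  have hS : Monotone S := monotone_nat_of_le_succ fun k l hl => by
    simpa [S] using pow_apply_pos_of_le hM hdiag (by simpa [S] using hl) k.le_succ
  obtain ⟨k, hk, hstable⟩ := Finset.exists_le_card_succ_eq_of_monotone S hS
  have hi : 0 < (M ^ k) i i := pow_apply_pos_of_le hM hdiag (by simp) (Nat.zero_le k)
  refine pow_apply_pos_of_le hM hdiag (pow_apply_pos_of_reflTransGen hM (fun l hl => ?_) hi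
    (hconn i j)) hk
  simpa [S] using hstable.subset (by simpa [S] using hl)

end Matrix

theorem Mmat_pos {n : ℕ} {pi α : Fin n → ℝ} {ξ : ℝ} (hpi : ∀ i, 0 < pi i) (hξ0 : 0 < ξ)
    (hξ1 : ξ ≤ 1) (hα0 : ∀ ℓ, 0 < α ℓ) (hα1 : ∀ ℓ, α ℓ ≤ 1) (i ℓ : Fin n) :
    0 < Mmat pi α ξ i ℓ := by
  have hc : 0 < ξ / ∑ q, pi q * α q := div_pos hξ0 <|
    Finset.sum_pos (fun q _ => mul_pos (hpi q) (hα0 q)) ⟨i, Finset.mem_univ i⟩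
  have := hpi ℓ; have := hα0 i; have := hα0 ℓ
  unfold Mmat
  split_ifs with h
  · have : ξ * α i ≤ 1 := mul_le_one₀ hξ1 (hα0 i).le (hα1 i)
    have : 0 < (ξ / ∑ q, pi q * α q) * α i ^ 2 * pi i := by subst h; positivity
    linarith
  · positivity

section modM

variable {n : ℕ} {A M : Matrix (Fin n) (Fin n) ℝ}

theorem le_modM_apply_self (hM : ∀ i j, 0 ≤ M i j) (i : Fin n) : M i i ≤ modM A M i i := by
  simpa [modM] using Finset.sum_nonneg fun j _ => hM i j

theorem modM_nonneg (hM : ∀ i j, 0 ≤ M i j) (hA : ∀ i ℓ, 0 ≤ A i ℓ) (i ℓ : Fin n) :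
    0 ≤ modM A M i ℓ := by
  obtain rfl | h := eq_or_ne i ℓ
  · exact (hM i i).trans (le_modM_apply_self hM i)
  · simpa [modM, h] using mul_nonneg (hA i ℓ) (hM i ℓ)

theorem modM_apply_pos_of_eq_one (hM : ∀ i j, 0 < M i j) {i ℓ : Fin n} (h : A i ℓ = 1) :
    0 < modM A M i ℓ := by
  obtain rfl | hne := eq_or_ne i ℓ
  · exact (hM i i).trans_le (le_modM_apply_self (fun i j => (hM i j).le) i)
  · simpa [modM, hne, h] using hM i ℓ

end modM

theorem stmt12_general {n : ℕ} (pi : Fin n → ℝ)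
    (hpi0 : ∀ i, 0 < pi i)
    (ξ : ℝ) (hξ0 : 0 < ξ) (hξ1 : ξ ≤ 1)
    (α : Fin n → ℝ) (hα0 : ∀ ℓ, 0 < α ℓ) (hα1 : ∀ ℓ, α ℓ ≤ 1)
    (A : Matrix (Fin n) (Fin n) ℝ)
    (hA01 : ∀ i ℓ, A i ℓ = 0 ∨ A i ℓ = 1)
    (hASC : ∀ i ℓ, Relation.ReflTransGen (fun a b => A a b = 1) i ℓ) :
    ∀ i ℓ, 0 < ((modM A (Mmat pi α ξ)) ^ n) i ℓ := by
  have hM := Mmat_pos hpi0 hξ0 hξ1 hα0 hα1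
  have hM' : ∀ i j, 0 ≤ Mmat pi α ξ i j := fun i j => (hM i j).le
  have hA : ∀ i ℓ, 0 ≤ A i ℓ := fun i ℓ => by rcases hA01 i ℓ with h | h <;> simp [h]
  intro i ℓ
  simpa using Matrix.pow_card_apply_pos (modM_nonneg hM' hA)
    (fun i => (hM i i).trans_le (le_modM_apply_self hM' i))
    (fun i ℓ => Relation.ReflTransGen.mono (fun _ _ => modM_apply_pos_of_eq_one hM) _ _
      (hASC i ℓ)) i ℓ

/-- primitivity of the constrained Markov matrix. If `pi` is entrywise
positive, `ξ > 0`, and the graph of the symmetric 0-1 constraint matrix `A` (with unit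
diagonal) is strongly connected, then the `n`-th power of the modified matrix
`M̃ = modM A (M(ξ,α))` is entrywise strictly positive, i.e. `M̃` is primitive. -/
theorem stmt12 {n : ℕ} (hn : 1 ≤ n) (pi : Fin n → ℝ)
    (hpi0 : ∀ i, 0 < pi i) (hpi1 : ∑ i, pi i = 1)
    (ξ : ℝ) (hξ0 : 0 < ξ) (hξ1 : ξ ≤ 1)
    (α : Fin n → ℝ) (hα0 : ∀ ℓ, 0 < α ℓ) (hα1 : ∀ ℓ, α ℓ ≤ 1)
    (A : Matrix (Fin n) (Fin n) ℝ)
    (hA01 : ∀ i ℓ, A i ℓ = 0 ∨ A i ℓ = 1)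
    (hAsymm : ∀ i ℓ, A i ℓ = A ℓ i)
    (hAdiag : ∀ i, A i i = 1)
    (hASC : ∀ i ℓ, Relation.ReflTransGen (fun a b => A a b = 1) i ℓ) :
    ∀ i ℓ, 0 < ((modM A (Mmat pi α ξ)) ^ n) i ℓ :=
  stmt12_general pi hpi0 ξ hξ0 hξ1 α hα0 hα1 A hA01 hASC
end

section
/- (Convergence of inhomogeneous Markov chains with motion constraints) Let π ∈ ℝⁿ be a probability vector with π[i] > 0 for all i, and fix constants ξ_min > 0 and a ∈ (0,1]. Let A ∈ {0,1}^{n×n} be symmetric with A[i,i] = 1 for all i, whose associated graph on {1,…,n} (edge from i to ℓ iff A[i,ℓ] = 1) is strongly connected. Let (ξ_k)_{k≥0} satisfy ξ_k ∈ {0} ∪ [ξ_min, 1] with ξ_k > 0 for infinitely many k, let (α_k)_{k≥0} satisfy a ≤ α_k[ℓ] ≤ 1 for all k, ℓ, and let M̃_k be the modification of M(ξ_k, α_k) by A. Then for every probability vector x₀ ∈ ℝⁿ, the products x_k = x₀·M̃₀·M̃₁·⋯·M̃_{k−1} converge pointwise to π as k → ∞. -/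
open Matrix BigOperators Finset Filter

/-!
Every `M̃_k` is row stochastic and in detailed balance with `π`, so `π` is stationary and the
`ℓ¹` distance `∑ |x_k i - π i|` never increases. A step with `ξ_k = 0` is the identity, while a
step with `ξ_k ≥ ξmin` has entries at least `c = ξmin·a·(min π)·a` on every edge of `A`. Since
`A` is connected and reflexive, all pairs are joined by `A`-paths of one common length `L`, so
the product over a stretch containing `L` active steps dominates `c^L · π` entrywise. This
Doeblin minorization contracts the `ℓ¹` distance by the factor `1 - c^L`, and as there are
infinitely many active steps the distance tends to `0`.
-/

open Relation

theorem Relation.ReflTransGen.exists_iterate_comp {α : Type*} {R : α → α → Prop} {a b : α}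
    (h : ReflTransGen R a b) : ∃ j, (Comp R)^[j] Eq a b := by
  induction h using Relation.ReflTransGen.head_induction_on with
  | refl => exact ⟨0, rfl⟩
  | head hac _ ih =>
    obtain ⟨j, hj⟩ := ih
    exact ⟨j + 1, by rw [Function.iterate_succ_apply']; exact ⟨_, hac, hj⟩⟩

theorem iterate_comp_mono_of_reflexive {α : Type*} {R : α → α → Prop} (hR : ∀ a, R a a)
    {j j' : ℕ} (hjj' : j ≤ j') {a b : α} (h : (Comp R)^[j] Eq a b) : (Comp R)^[j'] Eq a b := by
  induction hjj' with
  | refl => exact h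
  | step _ ih => rw [Function.iterate_succ_apply']; exact ⟨a, hR a, ih⟩

theorem exists_forall_iterate_comp {α : Type*} [Finite α] {R : α → α → Prop}
    (hR : ∀ a, R a a) (h : ∀ a b, ReflTransGen R a b) : ∃ L, ∀ a b, (Comp R)^[L] Eq a b := by
  have hev : ∀ᶠ L in atTop, ∀ p : α × α, (Comp R)^[L] Eq p.1 p.2 := by
    refine Filter.eventually_all.2 fun p => ?_
    obtain ⟨j, hj⟩ := (h p.1 p.2).exists_iterate_comp
    exact eventually_atTop.2 ⟨j, fun L hL => iterate_comp_mono_of_reflexive hR hL hj⟩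
  obtain ⟨L, hL⟩ := hev.exists
  exact ⟨L, fun a b => hL (a, b)⟩

theorem tendsto_zero_of_antitone_of_forall_exists_le_mul {V : ℕ → ℝ} {q : ℝ} (hV : Antitone V)
    (hV0 : ∀ k, 0 ≤ V k) (hq : q < 1) (hcontr : ∀ N, ∃ m, V m ≤ q * V N) :
    Tendsto V atTop (nhds 0) := by
  set r := max q 0
  have hpow : ∀ j, ∃ m, V m ≤ r ^ j * V 0 := by
    intro j
    induction j with
    | zero => exact ⟨0, by simp⟩
    | succ j ih =>
      obtain ⟨m, hm⟩ := ih
      obtain ⟨m', hm'⟩ := hcontr m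
      refine ⟨m', hm'.trans ?_⟩
      calc q * V m ≤ r * V m := mul_le_mul_of_nonneg_right (le_max_left _ _) (hV0 m)
        _ ≤ r * (r ^ j * V 0) := mul_le_mul_of_nonneg_left hm (le_max_right _ _)
        _ = r ^ (j + 1) * V 0 := by ring
  have hlim : Tendsto (fun j => r ^ j * V 0) atTop (nhds 0) := by
    simpa using (tendsto_pow_atTop_nhds_zero_of_lt_one (le_max_right q 0)
      (max_lt hq one_pos)).mul_const (V 0)
  refine tendsto_order.2 ⟨fun b hb => Eventually.of_forall fun k => hb.trans_le (hV0 k),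
    fun ε hε => ?_⟩
  obtain ⟨j, hj⟩ := (hlim.eventually (gt_mem_nhds hε)).exists
  obtain ⟨m, hm⟩ := hpow j
  exact eventually_atTop.2 ⟨m, fun k hk => (hV hk).trans_lt (hm.trans_lt hj)⟩

section Markov

variable {ι : Type*} [Fintype ι]

theorem vecMul_eq_self_of_detailed_balance {π : ι → ℝ} {M : Matrix ι ι ℝ}
    (hM : ∀ i, ∑ ℓ, M i ℓ = 1) (hbal : ∀ i ℓ, π i * M i ℓ = π ℓ * M ℓ i) : π ᵥ* M = π := by
  ext ℓ
  simp only [vecMul, dotProduct, hbal _ ℓ, ← Finset.mul_sum, hM, mul_one]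

variable [DecidableEq ι]

/-- Since `∑ v = 0`, the common part `δ • π` of the rows of `M` does not contribute to `v ᵥ* M`. -/
theorem sum_abs_vecMul_le_of_sum_eq_zero {π : ι → ℝ} (hπ : ∑ i, π i = 1) {M : Matrix ι ι ℝ}
    (hM : M ∈ rowStochastic ℝ ι) {δ : ℝ} (hδ : ∀ i ℓ, δ * π ℓ ≤ M i ℓ) {v : ι → ℝ}
    (hv : ∑ i, v i = 0) : ∑ ℓ, |(v ᵥ* M) ℓ| ≤ (1 - δ) * ∑ i, |v i| := by
  have hshift : ∀ ℓ, (v ᵥ* M) ℓ = ∑ i, v i * (M i ℓ - δ * π ℓ) := fun ℓ => by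
    simp only [vecMul, dotProduct, mul_sub, Finset.sum_sub_distrib, ← Finset.sum_mul, hv,
      zero_mul, sub_zero]
  calc ∑ ℓ, |(v ᵥ* M) ℓ| ≤ ∑ ℓ, ∑ i, |v i| * (M i ℓ - δ * π ℓ) := by
        refine Finset.sum_le_sum fun ℓ _ => ?_
        rw [hshift]
        refine (Finset.abs_sum_le_sum_abs _ _).trans_eq (Finset.sum_congr rfl fun i _ => ?_)
        rw [abs_mul, abs_of_nonneg (sub_nonneg.2 (hδ i ℓ))]
    _ = (1 - δ) * ∑ i, |v i| := by
        rw [Finset.sum_comm, Finset.mul_sum]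
        refine Finset.sum_congr rfl fun i _ => ?_
        rw [← Finset.mul_sum, Finset.sum_sub_distrib, sum_row_of_mem_rowStochastic hM,
          ← Finset.mul_sum, hπ, mul_one, mul_comm]

theorem sum_abs_vecMul_sub_le {π x : ι → ℝ} (hπ : ∑ i, π i = 1) (hx : ∑ i, x i = 1)
    {M : Matrix ι ι ℝ} (hM : M ∈ rowStochastic ℝ ι) (hπM : π ᵥ* M = π) {δ : ℝ}
    (hδ : ∀ i ℓ, δ * π ℓ ≤ M i ℓ) :
    ∑ ℓ, |(x ᵥ* M) ℓ - π ℓ| ≤ (1 - δ) * ∑ i, |x i - π i| := by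
  have h := sum_abs_vecMul_le_of_sum_eq_zero hπ hM hδ (v := x - π)
    (by simp [Finset.sum_sub_distrib, hx, hπ])
  rwa [sub_vecMul, hπM] at h

section Trajectory

variable {π : ι → ℝ} {P : ℕ → Matrix ι ι ℝ} {x : ℕ → ι → ℝ} {act : ℕ → Prop}
  {R : ι → ι → Prop} {c : ℝ}
  (hx : ∀ k, x (k + 1) = x k ᵥ* P k) (hP : ∀ k, P k ∈ rowStochastic ℝ ι)
  (hPπ : ∀ k, π ᵥ* P k = π) (hidle : ∀ k, ¬ act k → P k = 1)
  (hact : ∀ N, ∃ k, N ≤ k ∧ act k) (hmin : ∀ k, act k → ∀ i ℓ, R i ℓ → c ≤ P k i ℓ)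
include hx

include hidle in
theorem eq_of_idle_stretch {N k : ℕ} (hNk : N ≤ k) (hquiet : ∀ t, N ≤ t → t < k → ¬ act t) :
    x k = x N := by
  induction k, hNk using Nat.le_induction with
  | base => rfl
  | succ k hNk ih =>
    rw [hx, hidle k (hquiet k hNk k.lt_succ_self), vecMul_one,
      ih fun t ht htk => hquiet t ht (htk.trans k.lt_succ_self)]

include hP hPπ hidle hact hmin in
theorem exists_window_minorization (hc : 0 ≤ c) (j N : ℕ) :
    ∃ m, ∃ W ∈ rowStochastic ℝ ι, π ᵥ* W = π ∧ x m = x N ᵥ* W ∧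
      ∀ i ℓ, (Comp R)^[j] Eq i ℓ → c ^ j ≤ W i ℓ := by
  classical
  induction j generalizing N with
  | zero =>
    refine ⟨N, 1, one_mem _, vecMul_one _, (vecMul_one _).symm, ?_⟩
    rintro i ℓ rfl
    simp
  | succ j ih =>
    let k := Nat.find (hact N)
    obtain ⟨hNk, hk⟩ : N ≤ k ∧ act k := Nat.find_spec (hact N)
    have hxk : x k = x N := eq_of_idle_stretch hx hidle hNk
      fun t hNt htk hactt => Nat.find_min (hact N) htk ⟨hNt, hactt⟩
    obtain ⟨m, W, hW, hWπ, hxm, hWc⟩ := ih (k + 1)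
    refine ⟨m, P k * W, mul_mem (hP k) hW, by rw [← vecMul_vecMul, hPπ, hWπ], ?_, ?_⟩
    · rw [hxm, hx, hxk, vecMul_vecMul]
    · intro i ℓ hiℓ
      rw [Function.iterate_succ_apply'] at hiℓ
      obtain ⟨w, hiw, hwℓ⟩ := hiℓ
      calc c ^ (j + 1) = c * c ^ j := pow_succ' c j
        _ ≤ P k i w * W w ℓ :=
          mul_le_mul (hmin k hk i w hiw) (hWc w ℓ hwℓ) (pow_nonneg hc j)
            ((hP k).1 i w)
        _ ≤ (P k * W) i ℓ := by
          rw [mul_apply]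
          exact Finset.single_le_sum (fun q _ => mul_nonneg ((hP k).1 i q) (hW.1 q ℓ))
            (Finset.mem_univ w)

include hP hPπ hidle hact hmin in
theorem tendsto_of_frequent_minorization (hπ0 : ∀ i, 0 ≤ π i) (hπ1 : ∑ i, π i = 1)
    (hx0 : ∑ i, x 0 i = 1) (hR : ∀ i, R i i) (hconn : ∀ i ℓ, ReflTransGen R i ℓ) (hc : 0 < c)
    (i : ι) : Tendsto (fun k => x k i) atTop (nhds (π i)) := by
  have hsum : ∀ k, ∑ i, x k i = 1 := by
    intro k
    induction k with
    | zero => exact hx0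
    | succ k ih =>
      rw [← dotProduct_one] at ih ⊢
      rw [hx]
      exact vecMul_dotProduct_one_eq_one_rowStochastic (hP k) ih
  set V : ℕ → ℝ := fun k => ∑ i, |x k i - π i|
  have hanti : Antitone V := antitone_nat_of_succ_le fun k => by
    simpa [V, hx] using sum_abs_vecMul_sub_le hπ1 (hsum k) (hP k) (hPπ k) (δ := 0)
      (by simpa using (hP k).1)
  obtain ⟨L, hL⟩ := exists_forall_iterate_comp hR hconn
  have hcontr : ∀ N, ∃ m, V m ≤ (1 - c ^ L) * V N := by
    intro N
    obtain ⟨m, W, hW, hWπ, hxm, hWc⟩ :=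
      exists_window_minorization hx hP hPπ hidle hact hmin hc.le L N
    refine ⟨m, ?_⟩
    simp only [V, hxm]
    refine sum_abs_vecMul_sub_le hπ1 (hsum N) hW hWπ fun i ℓ => ?_
    have hπℓ : π ℓ ≤ 1 := hπ1 ▸ Finset.single_le_sum (fun q _ => hπ0 q) (Finset.mem_univ ℓ)
    exact (mul_le_of_le_one_right (pow_nonneg hc.le L) hπℓ).trans (hWc i ℓ (hL i ℓ))
  have hV : Tendsto V atTop (nhds 0) :=
    tendsto_zero_of_antitone_of_forall_exists_le_mul hanti
      (fun k => Finset.sum_nonneg fun i _ => abs_nonneg _) (by linarith [pow_pos hc L]) hcontr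
  have hxi : Tendsto (fun k => x k i - π i) atTop (nhds 0) :=
    squeeze_zero_norm (fun k => Finset.single_le_sum (f := fun i => |x k i - π i|)
      (fun q _ => abs_nonneg _) (Finset.mem_univ i)) hV
  simpa using hxi.add_const (π i)

end Trajectory

end Markov

section Mmat

variable {n : ℕ} {pi α : Fin n → ℝ} {ξ : ℝ}

theorem Mmat_apply_eq (i ℓ : Fin n) :
    Mmat pi α ξ i ℓ = (if i = ℓ then 1 - ξ * α i else 0)
      + ξ / (∑ q, pi q * α q) * α i * (pi ℓ * α ℓ) := by
  unfold Mmat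
  split_ifs with h
  · subst h; ring
  · ring

theorem Mmat_zero : Mmat pi α 0 = 1 := by
  ext i ℓ
  simp [Mmat_apply_eq, one_apply]

theorem Mmat_detailed_balance (i ℓ : Fin n) :
    pi i * Mmat pi α ξ i ℓ = pi ℓ * Mmat pi α ξ ℓ i := by
  by_cases h : i = ℓ
  · subst h; rfl
  · simp only [Mmat, if_neg h, if_neg (Ne.symm h)]
    ring

theorem le_Mmat_apply (hξα : ξ * α i ≤ 1) (ℓ : Fin n) :
    ξ / (∑ q, pi q * α q) * α i * (pi ℓ * α ℓ) ≤ Mmat pi α ξ i ℓ := by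
  rw [Mmat_apply_eq]
  split_ifs <;> linarith

theorem Mmat_mem_rowStochastic (hξ0 : 0 ≤ ξ) (hξ1 : ξ ≤ 1) (hα0 : ∀ l, 0 ≤ α l)
    (hα1 : ∀ l, α l ≤ 1) (hpi : ∀ l, 0 ≤ pi l) (hS : 0 < ∑ q, pi q * α q) :
    Mmat pi α ξ ∈ rowStochastic ℝ (Fin n) := by
  refine mem_rowStochastic_iff_sum.2 ⟨fun i ℓ => ?_, fun i => ?_⟩
  · exact (by have := hα0 i; have := hα0 ℓ; have := hpi ℓ; positivity :
      0 ≤ ξ / (∑ q, pi q * α q) * α i * (pi ℓ * α ℓ)).trans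
      (le_Mmat_apply (mul_le_one₀ hξ1 (hα0 i) (hα1 i)) ℓ)
  · simp only [Mmat_apply_eq, Finset.sum_add_distrib, Finset.sum_ite_eq, Finset.mem_univ,
      if_true, ← Finset.mul_sum]
    field_simp
    ring

theorem mul_le_Mmat_apply {a m : ℝ} (hξ0 : 0 ≤ ξ) (hξ1 : ξ ≤ 1) (ha : 0 ≤ a)
    (hα : ∀ l, a ≤ α l ∧ α l ≤ 1) (hm : 0 ≤ m) (hpi : ∀ l, m ≤ pi l)
    (hS0 : 0 < ∑ q, pi q * α q) (hS1 : ∑ q, pi q * α q ≤ 1) (i ℓ : Fin n) :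
    ξ * a * (m * a) ≤ Mmat pi α ξ i ℓ := by
  have hα0 (l : Fin n) : 0 ≤ α l := ha.trans (hα l).1
  have hξS : 0 ≤ ξ / ∑ q, pi q * α q := div_nonneg hξ0 hS0.le
  calc ξ * a * (m * a) ≤ ξ / (∑ q, pi q * α q) * α i * (pi ℓ * α ℓ) :=
        mul_le_mul (mul_le_mul (le_div_self hξ0 hS0 hS1) (hα i).1 ha hξS)
          (mul_le_mul (hpi ℓ) (hα ℓ).1 ha (hm.trans (hpi ℓ))) (mul_nonneg hm ha)
          (mul_nonneg hξS (hα0 i))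
    _ ≤ Mmat pi α ξ i ℓ := le_Mmat_apply (mul_le_one₀ hξ1 (hα0 i) (hα i).2) ℓ

end Mmat

section modM

variable {n : ℕ} {A M : Matrix (Fin n) (Fin n) ℝ}

theorem modM_one (A : Matrix (Fin n) (Fin n) ℝ) : modM A 1 = 1 := by
  ext i ℓ
  unfold modM
  split_ifs with h
  · subst h
    rw [Finset.sum_eq_zero fun j hj => one_apply_ne' (Finset.mem_filter.1 hj).2.1, add_zero]
  · rw [one_apply_ne h, mul_zero]

theorem modM_detailed_balance {pi : Fin n → ℝ} (hA : ∀ i ℓ, A i ℓ = A ℓ i)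
    (hM : ∀ i ℓ, pi i * M i ℓ = pi ℓ * M ℓ i) (i ℓ : Fin n) :
    pi i * modM A M i ℓ = pi ℓ * modM A M ℓ i := by
  by_cases h : i = ℓ
  · subst h; rfl
  · simp only [modM, if_neg h, if_neg (Ne.symm h)]
    rw [hA ℓ i, mul_left_comm, hM, mul_left_comm]

theorem le_modM_apply (hM : ∀ i j, 0 ≤ M i j) {i ℓ : Fin n} (hA : A i ℓ = 1) :
    M i ℓ ≤ modM A M i ℓ := by
  unfold modM
  split_ifs with h
  · subst h
    exact le_add_of_nonneg_right (Finset.sum_nonneg fun j _ => hM i j)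
  · rw [hA, one_mul]

theorem modM_mem_rowStochastic (hA : ∀ i ℓ, A i ℓ = 0 ∨ A i ℓ = 1)
    (hM : M ∈ rowStochastic ℝ (Fin n)) : modM A M ∈ rowStochastic ℝ (Fin n) := by
  refine mem_rowStochastic_iff_sum.2 ⟨fun i ℓ => ?_, fun i => ?_⟩
  · unfold modM
    split_ifs
    · exact add_nonneg (hM.1 i i) (Finset.sum_nonneg fun j _ => hM.1 i j)
    · rcases hA i ℓ with h | h <;> simp [h, hM.1 i ℓ]
  · have hsplit : ∀ ℓ, modM A M i ℓ = M i ℓ - (if ℓ ≠ i ∧ A i ℓ = 0 then M i ℓ else 0)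
        + if i = ℓ then ∑ j ∈ Finset.univ.filter (fun j => j ≠ i ∧ A i j = 0), M i j else 0 := by
      intro ℓ
      unfold modM
      by_cases h : i = ℓ
      · subst h; simp
      · rcases hA i ℓ with hAiℓ | hAiℓ <;> simp [h, Ne.symm h, hAiℓ]
    rw [Finset.sum_congr rfl fun ℓ _ => hsplit ℓ, Finset.sum_add_distrib, Finset.sum_sub_distrib,
      Finset.sum_ite_eq, if_pos (Finset.mem_univ i), ← Finset.sum_filter, sub_add_cancel]
    exact sum_row_of_mem_rowStochastic hM i

end modM

theorem stmt13_general {n : ℕ} (pi : Fin n → ℝ)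
    (hpi0 : ∀ i, 0 < pi i) (hpi1 : ∑ i, pi i = 1)
    (ξmin : ℝ) (hξmin : 0 < ξmin) (a : ℝ) (ha0 : 0 < a)
    (A : Matrix (Fin n) (Fin n) ℝ)
    (hA01 : ∀ i ℓ, A i ℓ = 0 ∨ A i ℓ = 1)
    (hAsymm : ∀ i ℓ, A i ℓ = A ℓ i)
    (hAdiag : ∀ i, A i i = 1)
    (hASC : ∀ i ℓ, Relation.ReflTransGen (fun p q => A p q = 1) i ℓ)
    (ξ : ℕ → ℝ) (hξ : ∀ k, ξ k = 0 ∨ (ξmin ≤ ξ k ∧ ξ k ≤ 1))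
    (hξinf : ∀ N : ℕ, ∃ k, N ≤ k ∧ 0 < ξ k)
    (α : ℕ → Fin n → ℝ) (hα : ∀ k ℓ, a ≤ α k ℓ ∧ α k ℓ ≤ 1)
    (x₀ : Fin n → ℝ) (hx₀1 : ∑ i, x₀ i = 1)
    (x : ℕ → Fin n → ℝ) (hx0 : x 0 = x₀)
    (hxk : ∀ k, x (k + 1) = x k ᵥ* modM A (Mmat pi (α k) (ξ k))) :
    ∀ i, Tendsto (fun k => x k i) atTop (nhds (pi i)) := by
  intro i
  obtain ⟨imin, -, hpimin⟩ := Finset.exists_min_image Finset.univ pi ⟨i, Finset.mem_univ i⟩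
  have hξ01 (k : ℕ) : 0 ≤ ξ k ∧ ξ k ≤ 1 := by
    rcases hξ k with h | h
    · simp [h]
    · exact ⟨hξmin.le.trans h.1, h.2⟩
  have hα0 (k : ℕ) (ℓ : Fin n) : 0 ≤ α k ℓ := ha0.le.trans (hα k ℓ).1
  have hS0 (k : ℕ) : 0 < ∑ q, pi q * α k q :=
    Finset.sum_pos (fun q _ => mul_pos (hpi0 q) (ha0.trans_le (hα k q).1)) ⟨i, Finset.mem_univ i⟩
  have hS1 (k : ℕ) : ∑ q, pi q * α k q ≤ 1 := hpi1 ▸ Finset.sum_le_sum fun q _ =>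
    mul_le_of_le_one_right (hpi0 q).le (hα k q).2
  have hM (k : ℕ) : Mmat pi (α k) (ξ k) ∈ rowStochastic ℝ (Fin n) :=
    Mmat_mem_rowStochastic (hξ01 k).1 (hξ01 k).2 (hα0 k) (fun ℓ => (hα k ℓ).2)
      (fun ℓ => (hpi0 ℓ).le) (hS0 k)
  refine tendsto_of_frequent_minorization hxk (fun k => modM_mem_rowStochastic hA01 (hM k))
    (fun k => vecMul_eq_self_of_detailed_balance
      (sum_row_of_mem_rowStochastic (modM_mem_rowStochastic hA01 (hM k)))
      (modM_detailed_balance hAsymm Mmat_detailed_balance))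
    (act := fun k => 0 < ξ k) (fun k hk => ?_) hξinf (c := ξmin * a * (pi imin * a))
    (fun k hk i ℓ hA => ?_) (fun ℓ => (hpi0 ℓ).le) hpi1 (hx0 ▸ hx₀1) hAdiag hASC
    (by have := hpi0 imin; positivity) i
  · rw [(hξ k).resolve_right fun h => hk (hξmin.trans_le h.1), Mmat_zero, modM_one]
  · calc ξmin * a * (pi imin * a) ≤ ξ k * a * (pi imin * a) :=
          mul_le_mul_of_nonneg_right (mul_le_mul_of_nonneg_right
            ((hξ k).resolve_left hk.ne').1 ha0.le) (mul_nonneg (hpi0 imin).le ha0.le)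
      _ ≤ Mmat pi (α k) (ξ k) i ℓ := mul_le_Mmat_apply (hξ01 k).1 (hξ01 k).2 ha0.le (hα k)
          (hpi0 imin).le (fun ℓ => hpimin ℓ (Finset.mem_univ ℓ)) (hS0 k) (hS1 k) i ℓ
      _ ≤ modM A (Mmat pi (α k) (ξ k)) i ℓ := le_modM_apply (hM k).1 hA

/-- convergence of the inhomogeneous Markov chain with motion constraints.
With `pi` entrywise positive, a strongly connected symmetric 0-1 constraint matrix `A`
with unit diagonal, `ξ_k ∈ {0} ∪ [ξmin, 1]` with `ξ_k > 0` infinitely often, and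
`a ≤ α_k[ℓ] ≤ 1`, the iterates `x_{k+1} = x_k · M̃_k` (where `M̃_k` is the modification of
`M(ξ_k, α_k)` by `A`) converge pointwise to `pi` from any initial probability vector. -/
theorem stmt13 {n : ℕ} (hn : 1 ≤ n) (pi : Fin n → ℝ)
    (hpi0 : ∀ i, 0 < pi i) (hpi1 : ∑ i, pi i = 1)
    (ξmin : ℝ) (hξmin : 0 < ξmin) (a : ℝ) (ha0 : 0 < a) (ha1 : a ≤ 1)
    (A : Matrix (Fin n) (Fin n) ℝ)
    (hA01 : ∀ i ℓ, A i ℓ = 0 ∨ A i ℓ = 1)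
    (hAsymm : ∀ i ℓ, A i ℓ = A ℓ i)
    (hAdiag : ∀ i, A i i = 1)
    (hASC : ∀ i ℓ, Relation.ReflTransGen (fun p q => A p q = 1) i ℓ)
    (ξ : ℕ → ℝ) (hξ : ∀ k, ξ k = 0 ∨ (ξmin ≤ ξ k ∧ ξ k ≤ 1))
    (hξinf : ∀ N : ℕ, ∃ k, N ≤ k ∧ 0 < ξ k)
    (α : ℕ → Fin n → ℝ) (hα : ∀ k ℓ, a ≤ α k ℓ ∧ α k ℓ ≤ 1)
    (x₀ : Fin n → ℝ) (hx₀0 : ∀ i, 0 ≤ x₀ i) (hx₀1 : ∑ i, x₀ i = 1)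
    (x : ℕ → Fin n → ℝ) (hx0 : x 0 = x₀)
    (hxk : ∀ k, x (k + 1) = x k ᵥ* modM A (Mmat pi (α k) (ξ k))) :
    ∀ i, Tendsto (fun k => x k i) atTop (nhds (pi i)) :=
  stmt13_general pi hpi0 hpi1 ξmin hξmin a ha0 A hA01 hAsymm hAdiag hASC ξ hξ hξinf α hα x₀ hx₀1 x
    hx0 hxk
end
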